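/- limsup_{t→∞} Φ_r(t) < ∞ holds for some (equivalently all) r ≥ 1 if and only if there exists h ≥ 1 with limsup_{j→∞} p_{j+h}/p_j ≤ 1/2. -/

import Mathlib

noncomputable def Phi (p : ℕ → ℝ) (r : ℕ) (t : ℝ) : ℝ :=
  ∑' j : ℕ, Real.exp (-(t * p j)) * (t * p j) ^ r / r.factorial

/-!
Write `w_r(x) = e^{-x} x^r / r!`, so that `Φ_r(t) = ∑ w_r(t p_j)`. Since `x^n / n! ≤ e^x`, one has
`w_r(x) ≤ (r + 1) min(x, 1/x)`. If `p_{j+h} ≤ (3/4) p_j` from some index on, then along each of the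
`h` residue classes modulo `h` the numbers `t p_j` decrease geometrically, and the sum of
`min(x, 1/x)` over a geometric sequence is bounded independently of where it starts; hence `Φ_r`
is bounded.

Conversely `w_r ≥ e^{-1} 4^{-r} / r!` on `[1/4, 1]`. If `p_{j+h} > p_j / 4`, then at `t = 1/p_j`
the `h + 1` indices `j, …, j + h` all have `t p_i ∈ [1/4, 1]`, so `Φ_r(1/p_j)` is at least
`(h + 1) e^{-1} 4^{-r} / r!`. As `1/p_j → ∞`, a bound on `Φ_r` forces `p_{j+h} ≤ p_j / 4`
eventually once `h` is large.
-/

open Filter Finset Real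

noncomputable def poissonWeight (r : ℕ) (x : ℝ) : ℝ :=
  exp (-x) * x ^ r / r.factorial

lemma poissonWeight_nonneg (r : ℕ) {x : ℝ} (hx : 0 ≤ x) : 0 ≤ poissonWeight r x := by
  unfold poissonWeight
  positivity

lemma exp_neg_mul_pow_div_factorial_le_one {x : ℝ} (hx : 0 ≤ x) (n : ℕ) :
    exp (-x) * (x ^ n / n.factorial) ≤ 1 := by
  rw [exp_neg, inv_mul_le_one₀ (exp_pos x)]
  exact pow_div_factorial_le_exp x hx n

lemma poissonWeight_le_self {r : ℕ} (hr : 1 ≤ r) {x : ℝ} (hx : 0 ≤ x) : poissonWeight r x ≤ x := by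
  obtain ⟨m, rfl⟩ : ∃ m, r = m + 1 := ⟨r - 1, by omega⟩
  have hfactor : poissonWeight (m + 1) x = x / (m + 1) * (exp (-x) * (x ^ m / m.factorial)) := by
    unfold poissonWeight
    rw [Nat.factorial_succ]
    push_cast
    field_simp
    ring
  rw [hfactor]
  calc x / (m + 1) * (exp (-x) * (x ^ m / m.factorial)) ≤ x / (m + 1) :=
        mul_le_of_le_one_right (by positivity) (exp_neg_mul_pow_div_factorial_le_one hx m)
    _ ≤ x := div_le_self hx (by linarith [m.cast_nonneg (α := ℝ)])

lemma poissonWeight_le_div (r : ℕ) {x : ℝ} (hx : 0 < x) :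
    poissonWeight r x ≤ (r + 1) / x := by
  have hfactor : poissonWeight r x = (r + 1) / x * (exp (-x) * (x ^ (r + 1) / (r + 1).factorial)) := by
    unfold poissonWeight
    rw [Nat.factorial_succ]
    push_cast
    field_simp
    ring
  rw [hfactor]
  exact mul_le_of_le_one_right (by positivity) (exp_neg_mul_pow_div_factorial_le_one hx.le _)

lemma poissonWeight_le_mul_min {r : ℕ} (hr : 1 ≤ r) {x : ℝ} (hx : 0 < x) :
    poissonWeight r x ≤ (r + 1) * min x x⁻¹ := by
  rw [mul_min_of_nonneg _ _ (by positivity), ← div_eq_mul_inv]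
  refine le_min ?_ (poissonWeight_le_div r hx)
  calc poissonWeight r x ≤ x := poissonWeight_le_self hr hx.le
    _ ≤ (r + 1) * x := le_mul_of_one_le_left hx.le (by linarith [r.cast_nonneg (α := ℝ)])

lemma min_inv_le_one (x : ℝ) : min x x⁻¹ ≤ 1 := by
  rcases le_total x 1 with h | h
  · exact (min_le_left _ _).trans h
  · exact (min_le_right _ _).trans (inv_le_one_of_one_le₀ h)

/-- Along a sequence with `b (k + 1) ≤ q * b k`, each step lowers this potential by at least
`(1 - q) * min (b k) (b k)⁻¹`, and the potential stays in `[0, 2]`. -/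
noncomputable def minInvPotential (x : ℝ) : ℝ := if x ≤ 1 then x else 2 - x⁻¹

lemma minInvPotential_nonneg {x : ℝ} (hx : 0 ≤ x) : 0 ≤ minInvPotential x := by
  unfold minInvPotential
  split_ifs with h
  · exact hx
  · linarith [inv_lt_one_of_one_lt₀ (not_le.mp h)]

lemma minInvPotential_le_two {x : ℝ} (hx : 0 ≤ x) : minInvPotential x ≤ 2 := by
  unfold minInvPotential
  split_ifs
  · linarith
  · linarith [inv_nonneg.mpr hx]

lemma mul_min_inv_le_minInvPotential_sub {q x y : ℝ} (hq : q ≤ 1) (hx : 0 < x) (hy : 0 < y)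
    (hyx : y ≤ q * x) :
    (1 - q) * min x x⁻¹ ≤ minInvPotential x - minInvPotential y := by
  have hq0 : 0 < q := pos_of_mul_pos_left (hy.trans_le hyx) hx.le
  have hxy : y ≤ x := hyx.trans (mul_le_of_le_one_left hx.le hq)
  unfold minInvPotential
  split_ifs with hx1 hy1 hy1
  · nlinarith [min_le_left x x⁻¹]
  · linarith
  · have : (1 - q) * x⁻¹ ≤ 2 - x⁻¹ - y := by
      rw [← div_eq_mul_inv, div_le_iff₀ hx, sub_mul, sub_mul, inv_mul_cancel₀ hx.ne']
      -- `y ≤ q * x` is the useful bound when `q * x ≤ 1`, and `y ≤ 1` otherwise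
      rcases le_or_gt (q * x) 1 with hqx | hqx <;> nlinarith
    nlinarith [min_le_right x x⁻¹]
  · have : (1 - q) * x⁻¹ ≤ y⁻¹ - x⁻¹ := by
      rw [← div_eq_mul_inv, div_le_iff₀ hx, sub_mul, inv_mul_cancel₀ hx.ne', le_sub_iff_add_le,
        ← div_eq_inv_mul, le_div_iff₀ hy]
      nlinarith
    nlinarith [min_le_right x x⁻¹]

lemma sum_range_min_inv_le_of_ratio_le {b : ℕ → ℝ} {q : ℝ} (hq : q < 1) (hb : ∀ k, 0 < b k)
    (hbq : ∀ k, b (k + 1) ≤ q * b k) (n : ℕ) :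
    ∑ k ∈ range n, min (b k) (b k)⁻¹ ≤ 2 / (1 - q) := by
  rw [le_div_iff₀ (by linarith), sum_mul]
  calc ∑ k ∈ range n, min (b k) (b k)⁻¹ * (1 - q)
      ≤ ∑ k ∈ range n, (minInvPotential (b k) - minInvPotential (b (k + 1))) := by
        gcongr with k
        rw [mul_comm]
        exact mul_min_inv_le_minInvPotential_sub hq.le (hb k) (hb (k + 1)) (hbq k)
    _ = minInvPotential (b 0) - minInvPotential (b n) := sum_range_sub' _ _
    _ ≤ 2 := by
        linarith [minInvPotential_le_two (hb 0).le, minInvPotential_nonneg (hb n).le]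

lemma sum_range_mul_eq_sum_sum {M : Type*} [AddCommMonoid M] (f : ℕ → M) (m n : ℕ) :
    ∑ j ∈ range (m * n), f j = ∑ k ∈ range m, ∑ i ∈ range n, f (k * n + i) := by
  induction m with
  | zero => simp
  | succ m ih => rw [Nat.succ_mul, sum_range_add, ih, sum_range_succ]

/-- Splitting the indices `j ≥ J` into residue classes modulo `h`, each class is geometric. -/
lemma sum_range_min_inv_le_of_ratio_le_of_ge {b : ℕ → ℝ} {q : ℝ} {h J : ℕ} (hq : q < 1)
    (hh : 0 < h) (hb : ∀ j, 0 < b j) (hbq : ∀ j, J ≤ j → b (j + h) ≤ q * b j) (n : ℕ) :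
    ∑ j ∈ range n, min (b j) (b j)⁻¹ ≤ J + h * (2 / (1 - q)) := by
  have hg : ∀ j, 0 ≤ min (b j) (b j)⁻¹ := fun j => le_min (hb j).le (inv_nonneg.mpr (hb j).le)
  have hn : n ≤ J + n * h := by nlinarith
  calc ∑ j ∈ range n, min (b j) (b j)⁻¹
      ≤ ∑ j ∈ range (J + n * h), min (b j) (b j)⁻¹ :=
        sum_le_sum_of_subset_of_nonneg (range_subset_range.mpr hn) fun j _ _ => hg j
    _ = ∑ j ∈ range J, min (b j) (b j)⁻¹
          + ∑ i ∈ range h, ∑ k ∈ range n, min (b (J + (k * h + i))) (b (J + (k * h + i)))⁻¹ := by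
        rw [sum_range_add, sum_range_mul_eq_sum_sum, sum_comm]
    _ ≤ ∑ _j ∈ range J, (1 : ℝ) + ∑ _i ∈ range h, 2 / (1 - q) := by
        gcongr with j _ i
        · exact min_inv_le_one (b j)
        · refine sum_range_min_inv_le_of_ratio_le (b := fun k => b (J + (k * h + i))) hq
            (fun k => hb _) (fun k => ?_) n
          rw [show J + ((k + 1) * h + i) = J + (k * h + i) + h by ring]
          exact hbq _ (Nat.le_add_right _ _)
    _ = J + h * (2 / (1 - q)) := by simp

lemma Phi_le_of_ratio_le {p : ℕ → ℝ} {q : ℝ} {r h J : ℕ} (hq : q < 1) (hp : ∀ j, 0 < p j)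
    (hh : 0 < h) (hr : 1 ≤ r) (hpq : ∀ j, J ≤ j → p (j + h) ≤ q * p j) {t : ℝ} (ht : 0 < t) :
    Phi p r t ≤ (r + 1) * (J + h * (2 / (1 - q))) := by
  have htp : ∀ j, 0 < t * p j := fun j => mul_pos ht (hp j)
  refine tsum_le_of_sum_range_le (fun j => poissonWeight_nonneg r (htp j).le) fun n => ?_
  calc ∑ j ∈ range n, poissonWeight r (t * p j)
      ≤ ∑ j ∈ range n, (r + 1) * min (t * p j) (t * p j)⁻¹ :=
        sum_le_sum fun j _ => poissonWeight_le_mul_min hr (htp j)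
    _ = (r + 1) * ∑ j ∈ range n, min (t * p j) (t * p j)⁻¹ := (mul_sum _ _ _).symm
    _ ≤ (r + 1) * (J + h * (2 / (1 - q))) := by
        gcongr
        refine sum_range_min_inv_le_of_ratio_le_of_ge hq hh htp (fun j hj => ?_) n
        rw [mul_left_comm]
        exact mul_le_mul_of_nonneg_left (hpq j hj) ht.le

lemma summable_poissonWeight {p : ℕ → ℝ} (hp : ∀ j, 0 ≤ p j) (hps : Summable p) {r : ℕ}
    (hr : 1 ≤ r) {t : ℝ} (ht : 0 ≤ t) : Summable fun j => poissonWeight r (t * p j) :=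
  (hps.mul_left t).of_nonneg_of_le (fun j => poissonWeight_nonneg r (mul_nonneg ht (hp j)))
    fun j => poissonWeight_le_self hr (mul_nonneg ht (hp j))

lemma card_mul_le_Phi {p : ℕ → ℝ} (hp : ∀ j, 0 ≤ p j) (hps : Summable p) {r : ℕ} (hr : 1 ≤ r)
    {t : ℝ} (ht : 0 ≤ t) (s : Finset ℕ) {c : ℝ} (hc : ∀ i ∈ s, c ≤ poissonWeight r (t * p i)) :
    #s * c ≤ Phi p r t :=
  calc #s * c = ∑ _i ∈ s, c := by rw [sum_const, nsmul_eq_mul]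
    _ ≤ ∑ i ∈ s, poissonWeight r (t * p i) := sum_le_sum hc
    _ ≤ Phi p r t := (summable_poissonWeight hp hps hr ht).sum_le_tsum s
        fun i _ => poissonWeight_nonneg r (mul_nonneg ht (hp i))

lemma exists_eventually_ratio_le_quarter_of_Phi_le {p : ℕ → ℝ} (hp : ∀ j, 0 < p j)
    (hanti : Antitone p) (hps : Summable p) {r : ℕ} (hr : 1 ≤ r) {C : ℝ}
    (hC : ∀ᶠ t in atTop, Phi p r t ≤ C) :
    ∃ h : ℕ, 1 ≤ h ∧ ∀ᶠ j in atTop, p (j + h) ≤ p j / 4 := by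
  set c : ℝ := exp (-1) * (1 / 4) ^ r / r.factorial
  have hc : 0 < c := by positivity
  obtain ⟨N, hN⟩ := exists_nat_gt (C / c)
  refine ⟨N + 1, by omega, ?_⟩
  have hinv : Tendsto (fun j => (p j)⁻¹) atTop atTop :=
    (tendsto_nhdsWithin_of_tendsto_nhds_of_eventually_within _ hps.tendsto_atTop_zero
      (Eventually.of_forall hp)).inv_tendsto_nhdsGT_zero
  filter_upwards [hinv.eventually hC] with j hj
  by_contra! hgap
  have hweight : ∀ i ∈ Icc j (j + (N + 1)), c ≤ poissonWeight r ((p j)⁻¹ * p i) := by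
    intro i hi
    obtain ⟨hji, hij⟩ := mem_Icc.mp hi
    have hle : (p j)⁻¹ * p i ≤ 1 := (inv_mul_le_one₀ (hp j)).mpr (hanti hji)
    have hge : 1 / 4 ≤ (p j)⁻¹ * p i := by
      rw [le_inv_mul_iff₀ (hp j)]
      linarith [hanti hij]
    show exp (-1) * (1 / 4) ^ r / r.factorial ≤ exp (-((p j)⁻¹ * p i)) * _ ^ r / r.factorial
    gcongr
  have hlower := card_mul_le_Phi (fun i => (hp i).le) hps hr (inv_nonneg.mpr (hp j).le) _ hweight
  rw [Nat.card_Icc, show j + (N + 1) + 1 - j = N + 2 by omega] at hlower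
  rw [div_lt_iff₀ hc] at hN
  push_cast at hlower
  linarith

theorem exists_limsup_ratio_le_half_of_Phi_le {p : ℕ → ℝ} (hp : ∀ j, 0 < p j)
    (hanti : Antitone p) (hps : Summable p) {r : ℕ} (hr : 1 ≤ r) {C : ℝ}
    (hC : ∀ᶠ t in atTop, Phi p r t ≤ C) :
    ∃ h : ℕ, 1 ≤ h ∧ limsup (fun j => p (j + h) / p j) atTop ≤ 1 / 2 := by
  obtain ⟨h, hh, hev⟩ := exists_eventually_ratio_le_quarter_of_Phi_le hp hanti hps hr hC
  refine ⟨h, hh, limsup_le_of_le (isCoboundedUnder_le_of_le atTop (x := 0)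
    fun j => div_nonneg (hp _).le (hp j).le) ?_⟩
  filter_upwards [hev] with j hj
  rw [div_le_iff₀ (hp j)]
  linarith [hp j]

theorem exists_Phi_le_of_limsup_ratio_le_half {p : ℕ → ℝ} (hp : ∀ j, 0 < p j)
    (hanti : Antitone p) {h : ℕ} (hh : 1 ≤ h)
    (hlim : limsup (fun j => p (j + h) / p j) atTop ≤ 1 / 2) {r : ℕ} (hr : 1 ≤ r) :
    ∃ C : ℝ, ∀ᶠ t in atTop, Phi p r t ≤ C := by
  have hbdd : IsBoundedUnder (· ≤ ·) atTop fun j => p (j + h) / p j :=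
    isBoundedUnder_of ⟨1, fun j => (div_le_one (hp j)).mpr (hanti (Nat.le_add_right j h))⟩
  obtain ⟨J, hJ⟩ := eventually_atTop.mp
    (eventually_lt_of_limsup_lt (hlim.trans_lt (by norm_num : (1 / 2 : ℝ) < 3 / 4)) hbdd)
  refine ⟨_, (eventually_gt_atTop 0).mono fun t ht =>
    Phi_le_of_ratio_le (q := 3 / 4) (J := J) (by norm_num) hp hh hr (fun j hj => ?_) ht⟩
  exact ((div_lt_iff₀ (hp j)).mp (hJ j hj)).le

theorem stmt_18 (p : ℕ → ℝ) (hp : ∀ j, 0 < p j) (hdec : ∀ j, p (j + 1) ≤ p j)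
    (hsum : ∑' j : ℕ, p j = 1) :
    ((∃ r : ℕ, 1 ≤ r ∧ ∃ C : ℝ, ∀ᶠ t : ℝ in Filter.atTop, Phi p r t ≤ C) ↔
      ∃ h : ℕ, 1 ≤ h ∧
        Filter.limsup (fun j : ℕ => p (j + h) / p j) Filter.atTop ≤ 1 / 2) ∧
    ((∀ r : ℕ, 1 ≤ r → ∃ C : ℝ, ∀ᶠ t : ℝ in Filter.atTop, Phi p r t ≤ C) ↔
      ∃ h : ℕ, 1 ≤ h ∧
        Filter.limsup (fun j : ℕ => p (j + h) / p j) Filter.atTop ≤ 1 / 2) := by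
  have hps : Summable p := by
    by_contra hns
    rw [tsum_eq_zero_of_not_summable hns] at hsum
    exact zero_ne_one hsum
  have hanti : Antitone p := antitone_nat_of_succ_le hdec
  have necessary : ∀ r, 1 ≤ r → (∃ C : ℝ, ∀ᶠ t in atTop, Phi p r t ≤ C) →
      ∃ h : ℕ, 1 ≤ h ∧ limsup (fun j => p (j + h) / p j) atTop ≤ 1 / 2 :=
    fun r hr ⟨_, hC⟩ => exists_limsup_ratio_le_half_of_Phi_le hp hanti hps hr hC
  have sufficient : (∃ h : ℕ, 1 ≤ h ∧ limsup (fun j => p (j + h) / p j) atTop ≤ 1 / 2) →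
      ∀ r, 1 ≤ r → ∃ C : ℝ, ∀ᶠ t in atTop, Phi p r t ≤ C :=
    fun ⟨_, hh, hlim⟩ _ hr => exists_Phi_le_of_limsup_ratio_le_half hp hanti hh hlim hr
  exact ⟨⟨fun ⟨r, hr, hC⟩ => necessary r hr hC, fun hG => ⟨1, le_rfl, sufficient hG 1 le_rfl⟩⟩,
    ⟨fun hA => necessary 1 le_rfl (hA 1 le_rfl), sufficient⟩⟩
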